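/- arXiv:2407.05168 — 7 statements merged into one kernel-verified Lean document; each statement's English description precedes it below -/
import Mathlib

section
/- Let N ≥ 1, let Q be a real N×N matrix, b ∈ ℝ^N, fix an index i ∈ {1,…,N}, and let K ⊆ {1,…,N}\{i} be a nonempty finite set with scalars δ_k ∈ ℝ for k ∈ K. Assume b_i ≠ 0, that b_k ≠ 0 for all k ∈ K, that the row condition Q_{i:} = (b_i / b_k) · Q_{k:} holds for every k ∈ K (where Q_{j:} denotes the j-th row of Q), and that 1 + Σ_{k∈K} δ_k b_k / b_i ≠ 0 (this nonvanishing holds in particular whenever the deceptive game matrix is invertible, e.g., whenever δ lies in the stability-preserving set Δ). Then the deceptive reaction curve equals the nominal reaction curve: { x ∈ ℝ^N : Q_{i:} x + b_i + Σ_{k∈K} δ_k (Q_{k:} x + b_k) = 0 } = { x ∈ ℝ^N : Q_{i:} x + b_i = 0 }. -/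
/-!
Under the row condition each deceiver's partial gradient `Q_{k:} x + b_k` is the multiple
`b_k / b_i` of player `i`'s own partial gradient, so the perceived pseudogradient factors as
`(Q_{i:} x + b_i) * (1 + ∑ δ_k b_k / b_i)`; the second factor is a nonzero constant.
-/

namespace Matrix

variable {ι 𝕜 : Type*} [Fintype ι] [Field 𝕜]

lemma mulVec_add_eq_div_mul_of_row_eq_smul {Q : Matrix ι ι 𝕜} {b : ι → 𝕜} {i k : ι}
    (hbi : b i ≠ 0) (hbk : b k ≠ 0) (hrow : Q i = (b i / b k) • Q k) (x : ι → 𝕜) :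
    (Q *ᵥ x) k + b k = b k / b i * ((Q *ᵥ x) i + b i) := by
  have hQx : (Q *ᵥ x) i = b i / b k * (Q *ᵥ x) k := by
    simp only [mulVec, hrow, smul_dotProduct, smul_eq_mul]
  rw [hQx]
  field_simp

lemma mulVec_add_add_sum_eq_mul_of_row_eq_smul {Q : Matrix ι ι 𝕜} {b : ι → 𝕜} {i : ι}
    {K : Finset ι} (δ : ι → 𝕜) (hbi : b i ≠ 0) (hbk : ∀ k ∈ K, b k ≠ 0)
    (hrow : ∀ k ∈ K, Q i = (b i / b k) • Q k) (x : ι → 𝕜) :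
    (Q *ᵥ x) i + b i + ∑ k ∈ K, δ k * ((Q *ᵥ x) k + b k) =
      ((Q *ᵥ x) i + b i) * (1 + ∑ k ∈ K, δ k * b k / b i) := by
  rw [mul_add, mul_one, Finset.mul_sum]
  congr 1
  refine Finset.sum_congr rfl fun k hk => ?_
  rw [mulVec_add_eq_div_mul_of_row_eq_smul hbi (hbk k hk) (hrow k hk)]
  ring

end Matrix

theorem stmt2_general (N : ℕ)
    (Q : Matrix (Fin N) (Fin N) ℝ) (b : Fin N → ℝ)
    (i : Fin N) (K : Finset (Fin N))
    (δ : Fin N → ℝ)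
    (hbi : b i ≠ 0) (hbk : ∀ k ∈ K, b k ≠ 0)
    (hrow : ∀ k ∈ K, Q i = (b i / b k) • Q k)
    (hnv : 1 + ∑ k ∈ K, δ k * b k / b i ≠ 0) :
    {x : Fin N → ℝ |
        Q.mulVec x i + b i + ∑ k ∈ K, δ k * (Q.mulVec x k + b k) = 0} =
      {x : Fin N → ℝ | Q.mulVec x i + b i = 0} := by
  ext x
  simp only [Set.mem_ofPred_eq,
    Matrix.mulVec_add_add_sum_eq_mul_of_row_eq_smul δ hbi hbk hrow x, mul_eq_zero, hnv, or_false]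

theorem stmt2 (N : ℕ) (hN : 1 ≤ N)
    (Q : Matrix (Fin N) (Fin N) ℝ) (b : Fin N → ℝ)
    (i : Fin N) (K : Finset (Fin N)) (hKne : K.Nonempty) (hiK : i ∉ K)
    (δ : Fin N → ℝ)
    (hbi : b i ≠ 0) (hbk : ∀ k ∈ K, b k ≠ 0)
    (hrow : ∀ k ∈ K, Q i = (b i / b k) • Q k)
    (hnv : 1 + ∑ k ∈ K, δ k * b k / b i ≠ 0) :
    {x : Fin N → ℝ |
        Q.mulVec x i + b i + ∑ k ∈ K, δ k * (Q.mulVec x k + b k) = 0} =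
      {x : Fin N → ℝ | Q.mulVec x i + b i = 0} :=
  stmt2_general N Q b i K δ hbi hbk hrow hnv
end

section
/- Let N ≥ 2 and consider an N-player quadratic game with symmetric matrices Q_1, …, Q_N ∈ ℝ^(N×N), vectors b_1, …, b_N ∈ ℝ^N, scalars p_1, …, p_N, and costs J_i(x) = ½xᵀQ_i x + b_iᵀx + p_i. Let 𝒬 ∈ ℝ^(N×N) have i-th row equal to (Q_i)_{i:} and ℬ ∈ ℝ^N have i-th entry (b_i)_i, and assume 𝒬 is invertible with x* := −𝒬^{-1}ℬ. Fix an index d ≠ 1 (player 1 deceives player d), and let Q̄ ∈ ℝ^(N×N) be the matrix whose d-th row is (Q_d)_{1:} and all other rows zero, and B̄ ∈ ℝ^N the vector whose d-th entry is (b_d)_1 and all other entries zero; set Q_δ := 𝒬 + δQ̄ and B_δ := ℬ + δB̄ for δ ∈ ℝ. Assume the (N−1)×(N−1) matrix [𝒬]^{d,1} obtained from 𝒬 by deleting row d and column 1 is invertible. Define Φ ∈ ℝ^N by Φ_1 = 1 and (Φ_2,…,Φ_N)ᵀ = −([𝒬]^{d,1})^{-1} v, where v is the first column of the matrix obtained from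 𝒬 by deleting only row d; and define q_1 := −((b_d)_1 + (Q_d)_{1:} x*), q_2 := (Q_d)_{1:} Φ, q_3 := (Q_d)_{d:} Φ. Then for every δ ∈ ℝ such that q_2 δ + q_3 ≠ 0 and Q_δ is invertible, the point x_δ := −Q_δ^{-1} B_δ satisfies x_δ − x* = f(δ)·Φ with f(δ) := q_1 δ / (q_2 δ + q_3), and consequently, for every i ∈ {1,…,N}, J_i(x_δ) = r_{i,2} f(δ)² + r_{i,1} f(δ) + J_i(x*), where r_{i,2} := ½ ΦᵀQ_iΦ and r_{i,1} := (Q_i x* + b_i)ᵀΦ. -/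
/-!
The deceptive game differs from the nominal one only in row `d`, where player `d` evaluates
its first-row cost terms with weight `δ`. Since `Φ` is annihilated by every row of `𝒬` except
row `d`, moving from `x*` along `Φ` keeps all equations of the nominal equilibrium except
equation `d`, and equation `d` of the deceptive game is a single scalar linear equation in the
step length, whose solution is `f(δ)`. The costs are then quadratic polynomials in `f(δ)`,
read off by expanding `J_i (x* + f Φ)`, using the symmetry of `Q_i` for the cross terms.
-/

open Matrix

namespace Matrix

variable {ι R : Type*} [Fintype ι] [CommRing R]

theorem mulVec_neg_nonsing_inv_mulVec [DecidableEq ι] {A : Matrix ι ι R} (hA : IsUnit A.det)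
    (c : ι → R) : A *ᵥ -(A⁻¹ *ᵥ c) = -c := by
  rw [mulVec_neg, mulVec_mulVec, mul_nonsing_inv _ hA, one_mulVec]

theorem neg_nonsing_inv_mulVec_eq_of_mulVec_eq_neg [DecidableEq ι] {A : Matrix ι ι R}
    (hA : IsUnit A.det) {c y : ι → R} (h : A *ᵥ y = -c) : -(A⁻¹ *ᵥ c) = y := by
  rw [← neg_neg c, ← h, mulVec_neg, neg_neg, mulVec_mulVec, nonsing_inv_mul _ hA, one_mulVec]

theorem of_ite_row_mulVec [DecidableEq ι] (d : ι) (r x : ι → R) :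
    (of fun i j => if i = d then r j else 0) *ᵥ x = Pi.single d (r ⬝ᵥ x) := by
  ext i
  by_cases hi : i = d
  · subst hi; simp [mulVec, dotProduct]
  · simp [mulVec, dotProduct, hi]

theorem IsSymm.dotProduct_mulVec_comm {Q : Matrix ι ι R} (hQ : Q.IsSymm) (x y : ι → R) :
    x ⬝ᵥ Q *ᵥ y = Q *ᵥ x ⬝ᵥ y := by
  rw [dotProduct_mulVec, ← mulVec_transpose, hQ.eq]

noncomputable def offRowKernelVec {m : ℕ} (A : Matrix (Fin (m + 1)) (Fin (m + 1)) R)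
    (d : Fin (m + 1)) : Fin (m + 1) → R :=
  Fin.cons 1 (-((A.submatrix d.succAbove Fin.succ)⁻¹ *ᵥ fun i => A (d.succAbove i) 0))

theorem mulVec_offRowKernelVec {m : ℕ} (A : Matrix (Fin (m + 1)) (Fin (m + 1)) R)
    (d : Fin (m + 1)) (hA : IsUnit (A.submatrix d.succAbove Fin.succ).det) :
    A *ᵥ offRowKernelVec A d = Pi.single d ((A *ᵥ offRowKernelVec A d) d) := by
  ext i
  induction i using Fin.succAboveCases d with
  | x => simp
  | p k =>
    have hsolve := congrFun (mulVec_neg_nonsing_inv_mulVec hA fun i => A (d.succAbove i) 0) k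
    rw [Pi.single_apply, if_neg (Fin.succAbove_ne d k), mulVec, dotProduct, Fin.sum_univ_succ]
    simp only [mulVec, dotProduct, submatrix_apply] at hsolve
    simp only [offRowKernelVec, Fin.cons_zero, Fin.cons_succ, mul_one, hsolve]
    simp

theorem add_smul_ite_row_mulVec_add_smul [DecidableEq ι] {A : Matrix ι ι R}
    {B x φ r : ι → R} {d : ι} {β q δ f : R} (hx : A *ᵥ x = -B) (hφ : A *ᵥ φ = Pi.single d q)
    (hf : f * ((r ⬝ᵥ φ) * δ + q) = -(β + r ⬝ᵥ x) * δ) :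
    (A + δ • of fun i j => if i = d then r j else 0) *ᵥ (x + f • φ) =
      -(B + δ • Pi.single d β) := by
  rw [add_mulVec, smul_mulVec, of_ite_row_mulVec, mulVec_add, mulVec_smul, hx, hφ]
  ext i
  by_cases hi : i = d
  · subst hi
    simp only [Pi.add_apply, Pi.neg_apply, Pi.smul_apply, Pi.single_eq_same, smul_eq_mul,
      dotProduct_add, dotProduct_smul]
    linear_combination hf
  · simp [hi]

theorem IsSymm.quadratic_add_smul {K : Type*} [Field K] [NeZero (2 : K)]
    {Q : Matrix ι ι K} (hQ : Q.IsSymm) (b x φ : ι → K) (c t : K) :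
    (1/2) * ((x + t • φ) ⬝ᵥ Q *ᵥ (x + t • φ)) + b ⬝ᵥ (x + t • φ) + c =
      (1/2 * (φ ⬝ᵥ Q *ᵥ φ)) * t ^ 2 + ((Q *ᵥ x + b) ⬝ᵥ φ) * t +
        ((1/2) * (x ⬝ᵥ Q *ᵥ x) + b ⬝ᵥ x + c) := by
  have htwo : (1/2 : K) * 2 = 1 := one_div_mul_cancel two_ne_zero
  simp only [mulVec_add, mulVec_smul, dotProduct_add, add_dotProduct, dotProduct_smul,
    smul_dotProduct, smul_eq_mul]
  rw [hQ.dotProduct_mulVec_comm x φ, dotProduct_comm φ (Q *ᵥ x)]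
  linear_combination (t * (Q *ᵥ x ⬝ᵥ φ)) * htwo

end Matrix

theorem stmt4_general (n : ℕ)
    -- N-player quadratic game, N = n + 2 ≥ 2; "player 1" is index 0
    (Q : Fin (n+2) → Matrix (Fin (n+2)) (Fin (n+2)) ℝ)
    (b : Fin (n+2) → Fin (n+2) → ℝ) (p : Fin (n+2) → ℝ)
    (hsym : ∀ i, (Q i).IsSymm)
    (J : Fin (n+2) → (Fin (n+2) → ℝ) → ℝ)
    (hJ : ∀ i x, J i x = (1/2) * (x ⬝ᵥ ((Q i).mulVec x)) + (b i) ⬝ᵥ x + p i)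
    (𝒬 : Matrix (Fin (n+2)) (Fin (n+2)) ℝ)
    (h𝒬 : 𝒬 = Matrix.of fun i j => Q i i j)
    (ℬ : Fin (n+2) → ℝ)
    (h𝒬inv : IsUnit 𝒬.det)
    (xstar : Fin (n+2) → ℝ) (hxstar : xstar = -(𝒬⁻¹.mulVec ℬ))
    (d : Fin (n+2))
    (Qbar : Matrix (Fin (n+2)) (Fin (n+2)) ℝ)
    (hQbar : Qbar = Matrix.of fun i j => if i = d then Q d 0 j else 0)
    (Bbar : Fin (n+2) → ℝ)
    (hBbar : Bbar = fun i => if i = d then b d 0 else 0)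
    -- the matrix [𝒬]^{d,1} : delete row d and the first column
    (M : Matrix (Fin (n+1)) (Fin (n+1)) ℝ)
    (hM : M = 𝒬.submatrix d.succAbove Fin.succ)
    (hMinv : IsUnit M.det)
    -- first column of 𝒬 with row d deleted
    (v : Fin (n+1) → ℝ) (hv : v = fun i => 𝒬 (d.succAbove i) 0)
    (Φ : Fin (n+2) → ℝ)
    (hΦ : Φ = Fin.cons 1 (fun j => -((M⁻¹.mulVec v) j)))
    (q1 q2 q3 : ℝ)
    (hq1 : q1 = -(b d 0 + (Q d 0) ⬝ᵥ xstar))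
    (hq2 : q2 = (Q d 0) ⬝ᵥ Φ)
    (hq3 : q3 = (Q d d) ⬝ᵥ Φ)
    (δ : ℝ) (hδ : q2 * δ + q3 ≠ 0)
    (Qδ : Matrix (Fin (n+2)) (Fin (n+2)) ℝ) (hQδ : Qδ = 𝒬 + δ • Qbar)
    (Bδ : Fin (n+2) → ℝ) (hBδ : Bδ = ℬ + δ • Bbar)
    (hQδinv : IsUnit Qδ.det)
    (xδ : Fin (n+2) → ℝ) (hxδ : xδ = -(Qδ⁻¹.mulVec Bδ)) :
    xδ - xstar = (q1 * δ / (q2 * δ + q3)) • Φ ∧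
    ∀ i, J i xδ =
        ((1/2) * (Φ ⬝ᵥ ((Q i).mulVec Φ))) * (q1 * δ / (q2 * δ + q3))^2 +
        (((Q i).mulVec xstar + b i) ⬝ᵥ Φ) * (q1 * δ / (q2 * δ + q3)) +
        J i xstar := by
  set f : ℝ := q1 * δ / (q2 * δ + q3)
  have hxstar_eq : 𝒬 *ᵥ xstar = -ℬ := hxstar ▸ mulVec_neg_nonsing_inv_mulVec h𝒬inv ℬ
  have hΦ_eq : Φ = offRowKernelVec 𝒬 d := by rw [hΦ, hM, hv]; rfl
  have hΦ_ker : 𝒬 *ᵥ Φ = Pi.single d q3 := by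
    rw [hq3, hΦ_eq, mulVec_offRowKernelVec 𝒬 d (hM ▸ hMinv), h𝒬]
    rfl
  have hf : f * ((Q d 0 ⬝ᵥ Φ) * δ + q3) = -(b d 0 + Q d 0 ⬝ᵥ xstar) * δ := by
    rw [← hq2, div_mul_cancel₀ _ hδ, hq1]
  have hxδ_eq : xδ = xstar + f • Φ := by
    rw [hxδ]
    refine neg_nonsing_inv_mulVec_eq_of_mulVec_eq_neg hQδinv ?_
    have hBbar_single : Bbar = Pi.single d (b d 0) := by
      ext i; rw [hBbar, Pi.single_apply]
    rw [hQδ, hBδ, hQbar, hBbar_single]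
    exact add_smul_ite_row_mulVec_add_smul hxstar_eq hΦ_ker hf
  refine ⟨by rw [hxδ_eq, add_sub_cancel_left], fun i => ?_⟩
  rw [hJ, hJ, hxδ_eq, (hsym i).quadratic_add_smul]

theorem stmt4 (n : ℕ)
    -- N-player quadratic game, N = n + 2 ≥ 2; "player 1" is index 0
    (Q : Fin (n+2) → Matrix (Fin (n+2)) (Fin (n+2)) ℝ)
    (b : Fin (n+2) → Fin (n+2) → ℝ) (p : Fin (n+2) → ℝ)
    (hsym : ∀ i, (Q i).IsSymm)
    (J : Fin (n+2) → (Fin (n+2) → ℝ) → ℝ)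
    (hJ : ∀ i x, J i x = (1/2) * (x ⬝ᵥ ((Q i).mulVec x)) + (b i) ⬝ᵥ x + p i)
    (𝒬 : Matrix (Fin (n+2)) (Fin (n+2)) ℝ)
    (h𝒬 : 𝒬 = Matrix.of fun i j => Q i i j)
    (ℬ : Fin (n+2) → ℝ) (hℬ : ℬ = fun i => b i i)
    (h𝒬inv : IsUnit 𝒬.det)
    (xstar : Fin (n+2) → ℝ) (hxstar : xstar = -(𝒬⁻¹.mulVec ℬ))
    (d : Fin (n+2)) (hd : d ≠ 0)
    (Qbar : Matrix (Fin (n+2)) (Fin (n+2)) ℝ)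
    (hQbar : Qbar = Matrix.of fun i j => if i = d then Q d 0 j else 0)
    (Bbar : Fin (n+2) → ℝ)
    (hBbar : Bbar = fun i => if i = d then b d 0 else 0)
    -- the matrix [𝒬]^{d,1} : delete row d and the first column
    (M : Matrix (Fin (n+1)) (Fin (n+1)) ℝ)
    (hM : M = 𝒬.submatrix d.succAbove Fin.succ)
    (hMinv : IsUnit M.det)
    -- first column of 𝒬 with row d deleted
    (v : Fin (n+1) → ℝ) (hv : v = fun i => 𝒬 (d.succAbove i) 0)
    (Φ : Fin (n+2) → ℝ)
    (hΦ : Φ = Fin.cons 1 (fun j => -((M⁻¹.mulVec v) j)))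
    (q1 q2 q3 : ℝ)
    (hq1 : q1 = -(b d 0 + (Q d 0) ⬝ᵥ xstar))
    (hq2 : q2 = (Q d 0) ⬝ᵥ Φ)
    (hq3 : q3 = (Q d d) ⬝ᵥ Φ)
    (δ : ℝ) (hδ : q2 * δ + q3 ≠ 0)
    (Qδ : Matrix (Fin (n+2)) (Fin (n+2)) ℝ) (hQδ : Qδ = 𝒬 + δ • Qbar)
    (Bδ : Fin (n+2) → ℝ) (hBδ : Bδ = ℬ + δ • Bbar)
    (hQδinv : IsUnit Qδ.det)
    (xδ : Fin (n+2) → ℝ) (hxδ : xδ = -(Qδ⁻¹.mulVec Bδ)) :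
    xδ - xstar = (q1 * δ / (q2 * δ + q3)) • Φ ∧
    ∀ i, J i xδ =
        ((1/2) * (Φ ⬝ᵥ ((Q i).mulVec Φ))) * (q1 * δ / (q2 * δ + q3))^2 +
        (((Q i).mulVec xstar + b i) ⬝ᵥ Φ) * (q1 * δ / (q2 * δ + q3)) +
        J i xstar :=
  stmt4_general n Q b p hsym J hJ 𝒬 h𝒬 ℬ h𝒬inv xstar hxstar d Qbar hQbar Bbar hBbar M hM hMinv v hv
    Φ hΦ q1 q2 q3 hq1 hq2 hq3 δ hδ Qδ hQδ Bδ hBδ hQδinv xδ hxδ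
end

section
/- Let q_1, q_2, q_3, r_{1,2}, r_{1,1}, c ∈ ℝ with q_3 ≠ 0 and r_{1,2} ≠ 0, let ε_1 ∈ ℝ \ {0}, define f(δ) := q_1 δ / (q_2 δ + q_3) and 𝒥_1(e) := r_{1,2} e² + r_{1,1} e + c, and let Δ ⊆ { δ ∈ ℝ : q_2 δ + q_3 ≠ 0 } be any subset. Define the set of attainable values Ω := { J ∈ ℝ : there exists δ* ∈ Δ with 𝒥_1(f(δ*)) = J and ε_1 · (d/dδ)[𝒥_1(f(δ))]|_{δ=δ*} < 0 }. Then: (a) if ε_1 r_{1,2} q_1 q_3 > 0, then Ω = 𝒥_1( (−∞, −r_{1,1}/(2 r_{1,2})) ∩ f(Δ) ); and (b) if ε_1 r_{1,2} q_1 q_3 < 0, then Ω = 𝒥_1( (−r_{1,1}/(2 r_{1,2}), ∞) ∩ f(Δ) ), where 𝒥_1(E) and f(Δ) denote images of sets. -/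
/-!
By the chain rule, `d/dδ 𝒥₁(f δ) = 𝒥₁'(f δ) · q₁q₃ / (q₂δ + q₃)²`, and `𝒥₁'(e) = 2r₁₂(e - e₀)`
with `e₀ = -r₁₁ / (2r₁₂)` the vertex of the parabola. So `ε₁` times the derivative has the sign of
`ε₁r₁₂q₁q₃ · (f δ - e₀)`, and the stability condition at `δ` just says that `f δ` lies on the
appropriate side of `e₀`.
-/

open Set

lemma hasDerivAt_linear_div_affine {a b d x : ℝ} (hx : b * x + d ≠ 0) :
    HasDerivAt (fun x => a * x / (b * x + d)) (a * d / (b * x + d) ^ 2) x := by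
  have hnum : HasDerivAt (fun x => a * x) a x := by
    simpa using (hasDerivAt_id x).const_mul a
  have hden : HasDerivAt (fun x => b * x + d) b x := by
    simpa using ((hasDerivAt_id x).const_mul b).add_const d
  exact (hnum.div hden hx).congr_deriv (by ring)

lemma hasDerivAt_quadratic (r s c e : ℝ) :
    HasDerivAt (fun e => r * e ^ 2 + s * e + c) (2 * r * e + s) e :=
  (((hasDerivAt_pow 2 e).const_mul r).add ((hasDerivAt_id e).const_mul s)).add_const c
    |>.congr_deriv (by simp only [Nat.cast_ofNat]; ring)

lemma quadratic_comp_linear_div_affine_deriv_sign {a b d r s c ε x : ℝ}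
    (hx : b * x + d ≠ 0) (hr : r ≠ 0) :
    ε * deriv (fun x => r * (a * x / (b * x + d)) ^ 2 + s * (a * x / (b * x + d)) + c) x < 0 ↔
      (ε * r * a * d) * (a * x / (b * x + d) - -(s / (2 * r))) < 0 := by
  have hderiv : HasDerivAt
      (fun x => r * (a * x / (b * x + d)) ^ 2 + s * (a * x / (b * x + d)) + c)
      ((2 * r * (a * x / (b * x + d)) + s) * (a * d / (b * x + d) ^ 2)) x :=
    (hasDerivAt_quadratic r s c _).comp x (hasDerivAt_linear_div_affine hx)
  have hsq : 0 < (b * x + d) ^ 2 := by positivity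
  have hscaled : ε * ((2 * r * (a * x / (b * x + d)) + s) * (a * d / (b * x + d) ^ 2)) =
      2 * (ε * r * a * d) * (a * x / (b * x + d) - -(s / (2 * r))) / (b * x + d) ^ 2 := by
    field_simp
    ring
  rw [hderiv.deriv, hscaled, div_lt_iff₀ hsq, zero_mul]
  constructor <;> intro h <;> linarith

lemma setOf_exists_comp_eq_and {α β γ : Type*} {f : α → β} {g : β → γ} {Δ : Set α}
    {P : α → Prop} {S : Set β} (hP : ∀ x ∈ Δ, P x ↔ f x ∈ S) :
    {y | ∃ x ∈ Δ, g (f x) = y ∧ P x} = g '' (S ∩ f '' Δ) := by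
  ext y
  constructor
  · rintro ⟨x, hx, rfl, hPx⟩
    exact ⟨f x, ⟨(hP x hx).1 hPx, x, hx, rfl⟩, rfl⟩
  · rintro ⟨-, ⟨hS, x, hx, rfl⟩, rfl⟩
    exact ⟨x, hx, rfl, (hP x hx).2 hS⟩

theorem stmt6_general (q1 q2 q3 r12 r11 c : ℝ)
    (ε1 : ℝ)
    (f : ℝ → ℝ) (hf : f = fun δ => q1 * δ / (q2 * δ + q3))
    (𝒥 : ℝ → ℝ) (h𝒥 : 𝒥 = fun e => r12 * e^2 + r11 * e + c)
    (Δ : Set ℝ) (hΔ : Δ ⊆ {δ : ℝ | q2 * δ + q3 ≠ 0})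
    (Ω : Set ℝ)
    (hΩ : Ω = {J : ℝ | ∃ δstar ∈ Δ, 𝒥 (f δstar) = J ∧
        ε1 * deriv (fun δ => 𝒥 (f δ)) δstar < 0}) :
    (ε1 * r12 * q1 * q3 > 0 →
      Ω = 𝒥 '' (Set.Iio (-(r11 / (2 * r12))) ∩ f '' Δ)) ∧
    (ε1 * r12 * q1 * q3 < 0 →
      Ω = 𝒥 '' (Set.Ioi (-(r11 / (2 * r12))) ∩ f '' Δ)) := by
  subst hΩ
  have r12_ne_zero : ε1 * r12 * q1 * q3 ≠ 0 → r12 ≠ 0 := by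
    rintro hK rfl
    simp at hK
  have hsign (hr12 : r12 ≠ 0) : ∀ δ ∈ Δ, ε1 * deriv (fun δ => 𝒥 (f δ)) δ < 0 ↔
      (ε1 * r12 * q1 * q3) * (f δ - -(r11 / (2 * r12))) < 0 := by
    subst hf h𝒥
    exact fun δ hδ => quadratic_comp_linear_div_affine_deriv_sign (hΔ hδ) hr12
  constructor
  · intro hK
    refine setOf_exists_comp_eq_and fun δ hδ => ?_
    rw [hsign (r12_ne_zero hK.ne') δ hδ, ← smul_eq_mul,
      smul_neg_iff_of_pos_left hK, sub_neg, mem_Iio]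
  · intro hK
    refine setOf_exists_comp_eq_and fun δ hδ => ?_
    rw [hsign (r12_ne_zero hK.ne) δ hδ, ← smul_eq_mul,
      smul_neg_iff_of_neg_left hK, sub_pos, mem_Ioi]

theorem stmt6 (q1 q2 q3 r12 r11 c : ℝ) (hq3 : q3 ≠ 0) (hr12 : r12 ≠ 0)
    (ε1 : ℝ) (hε1 : ε1 ≠ 0)
    (f : ℝ → ℝ) (hf : f = fun δ => q1 * δ / (q2 * δ + q3))
    (𝒥 : ℝ → ℝ) (h𝒥 : 𝒥 = fun e => r12 * e^2 + r11 * e + c)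
    (Δ : Set ℝ) (hΔ : Δ ⊆ {δ : ℝ | q2 * δ + q3 ≠ 0})
    (Ω : Set ℝ)
    (hΩ : Ω = {J : ℝ | ∃ δstar ∈ Δ, 𝒥 (f δstar) = J ∧
        ε1 * deriv (fun δ => 𝒥 (f δ)) δstar < 0}) :
    (ε1 * r12 * q1 * q3 > 0 →
      Ω = 𝒥 '' (Set.Iio (-(r11 / (2 * r12))) ∩ f '' Δ)) ∧
    (ε1 * r12 * q1 * q3 < 0 →
      Ω = 𝒥 '' (Set.Ioi (-(r11 / (2 * r12))) ∩ f '' Δ)) :=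
  stmt6_general q1 q2 q3 r12 r11 c ε1 f hf 𝒥 h𝒥 Δ hΔ Ω hΩ
end

section
/- Let N ≥ 1 and, for each i ∈ {1,…,N}, let c_i : ℝ → ℝ be differentiable with derivative c_i' satisfying the strong monotonicity bound (c_i'(a) − c_i'(b))(a − b) ≥ κ_i (a − b)² for all a, b ∈ ℝ, where κ_i > 0. Let α_{i,k} ∈ ℝ for i ≠ k (with the convention α_{k,k} = 0), and define the pseudogradient G : ℝ^N → ℝ^N of the aggregative game by G_i(x) := c_i'(x_i) + Σ_{k≠i} α_{i,k} x_k. For each j define K_j := κ_j − Σ_{k≠j} |α_{j,k} + α_{k,j}| / 2. If K_j > 0 for all j ∈ {1,…,N}, then G is κ-strongly monotone for every κ ∈ (0, min_j K_j], i.e., (G(x) − G(y))ᵀ(x − y) ≥ κ |x − y|² for all x, y ∈ ℝ^N, where |·| is the Euclidean norm. -/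
/-- `F : ℝ^N → ℝ^N` is `κ`-strongly monotone (w.r.t. the Euclidean inner
product and norm). -/
def StronglyMonotone {N : ℕ} (F : (Fin N → ℝ) → Fin N → ℝ) (κ : ℝ) : Prop :=
  ∀ x y : Fin N → ℝ,
    ∑ i, (F x i - F y i) * (x i - y i) ≥ κ * ∑ i, (x i - y i)^2

lemma aux_amgm (A u v : ℝ) : 0 ≤ A * u * v + |A| * (u ^ 2 + v ^ 2) / 2 := by
  rcases abs_cases A with ⟨h1, h2⟩ | ⟨h1, h2⟩ <;> rw [h1] <;>
    nlinarith [mul_self_nonneg (u + v), mul_self_nonneg (u - v)]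

theorem stmt8 (N : ℕ) (hN : 1 ≤ N)
    (c : Fin N → ℝ → ℝ) (c' : Fin N → ℝ → ℝ) (κv : Fin N → ℝ)
    (hderiv : ∀ i x, HasDerivAt (c i) (c' i x) x)
    (hκv : ∀ i, 0 < κv i)
    (hsc : ∀ i a b, (c' i a - c' i b) * (a - b) ≥ κv i * (a - b)^2)
    (α : Fin N → Fin N → ℝ) (hα : ∀ k, α k k = 0)
    (G : (Fin N → ℝ) → Fin N → ℝ)
    (hG : G = fun x i => c' i (x i) + ∑ k ∈ Finset.univ.erase i, α i k * x k)
    (K : Fin N → ℝ)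
    (hK : K = fun j => κv j - ∑ k ∈ Finset.univ.erase j, |α j k + α k j| / 2)
    (hKpos : ∀ j, 0 < K j) :
    ∀ κ : ℝ, 0 < κ →
      κ ≤ Finset.univ.inf' (Finset.univ_nonempty_iff.mpr ⟨⟨0, hN⟩⟩) K →
      StronglyMonotone G κ := by
  intro κ hκ hκle x y
  have hκK : ∀ i : Fin N, κ ≤ K i := fun i =>
    hκle.trans (Finset.inf'_le _ (Finset.mem_univ i))
  set d : Fin N → ℝ := fun i => x i - y i with hd
  -- expand the pseudogradient difference
  have expand : ∑ i, (G x i - G y i) * (x i - y i)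
      = ∑ i, (c' i (x i) - c' i (y i)) * d i + ∑ i, ∑ k, α i k * d k * d i := by
    rw [← Finset.sum_add_distrib]
    apply Finset.sum_congr rfl
    intro i _
    have h0 : ∀ z : Fin N → ℝ, ∑ k ∈ Finset.univ.erase i, α i k * z k
        = ∑ k, α i k * z k := by
      intro z
      exact Finset.sum_erase _ (by rw [hα]; ring)
    rw [hG]
    simp only [h0]
    rw [← Finset.sum_mul]
    have hds : ∑ k, α i k * d k = ∑ k, α i k * x k - ∑ k, α i k * y k := by
      rw [← Finset.sum_sub_distrib]
      exact Finset.sum_congr rfl fun k _ => by simp only [hd]; ring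
    rw [hds]
    simp only [hd]
    ring
  -- bound the cross terms
  set T : ℝ := ∑ i, ∑ k, α i k * d k * d i with hT
  have hswap : ∑ i, ∑ k, |α i k + α k i| * d k ^ 2
      = ∑ i, ∑ k, |α i k + α k i| * d i ^ 2 := by
    rw [Finset.sum_comm]
    exact Finset.sum_congr rfl fun i _ => Finset.sum_congr rfl fun k _ => by
      rw [add_comm (α k i)]
  have hTbound : 2 * T + ∑ i, ∑ k, |α i k + α k i| * d i ^ 2 ≥ 0 := by
    have h2T : 2 * T = ∑ i, ∑ k, (α i k + α k i) * d i * d k := by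
      rw [two_mul, hT]
      nth_rewrite 2 [Finset.sum_comm]
      rw [← Finset.sum_add_distrib]
      exact Finset.sum_congr rfl fun i _ => by
        rw [← Finset.sum_add_distrib]
        exact Finset.sum_congr rfl fun k _ => by ring
    have habs : ∑ i, ∑ k, |α i k + α k i| * d i ^ 2
        = ∑ i, ∑ k, |α i k + α k i| * (d i ^ 2 + d k ^ 2) / 2 := by
      have hh : ∑ i, ∑ k, |α i k + α k i| * (d i ^ 2 + d k ^ 2) / 2
          = ((∑ i, ∑ k, |α i k + α k i| * d i ^ 2)
            + ∑ i, ∑ k, |α i k + α k i| * d k ^ 2) / 2 := by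
        rw [← Finset.sum_add_distrib, Finset.sum_div]
        refine Finset.sum_congr rfl fun i _ => ?_
        rw [← Finset.sum_add_distrib, Finset.sum_div]
        exact Finset.sum_congr rfl fun k _ => by ring
      rw [hh, hswap]
      ring
    rw [h2T, habs, ← Finset.sum_add_distrib]
    apply Finset.sum_nonneg
    intro i _
    rw [← Finset.sum_add_distrib]
    apply Finset.sum_nonneg
    intro k _
    exact aux_amgm _ _ _
  -- the strong convexity part
  have hc : ∑ i, (c' i (x i) - c' i (y i)) * d i ≥ ∑ i, κv i * d i ^ 2 := by
    apply Finset.sum_le_sum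
    intro i _
    exact hsc i (x i) (y i)
  -- combine
  have herase : ∀ i : Fin N, ∑ k, |α i k + α k i| * d i ^ 2 / 2
      = (∑ k ∈ Finset.univ.erase i, |α i k + α k i| / 2) * d i ^ 2 := by
    intro i
    rw [Finset.sum_mul, Finset.sum_erase (a := i) _ (by rw [hα]; simp)]
    exact Finset.sum_congr rfl fun k _ => by ring
  have hKd : ∑ i, (c' i (x i) - c' i (y i)) * d i + T ≥ ∑ i, K i * d i ^ 2 := by
    have hT2 : T ≥ -∑ i, (∑ k ∈ Finset.univ.erase i, |α i k + α k i| / 2) * d i ^ 2 := by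
      have : ∑ i, (∑ k ∈ Finset.univ.erase i, |α i k + α k i| / 2) * d i ^ 2
          = (∑ i, ∑ k, |α i k + α k i| * d i ^ 2) / 2 := by
        rw [Finset.sum_div]
        exact Finset.sum_congr rfl fun i _ => by
          rw [← herase i, Finset.sum_div]
      rw [this]
      linarith [hTbound]
    have hKsum : ∑ i, K i * d i ^ 2
        = ∑ i, κv i * d i ^ 2 - ∑ i, (∑ k ∈ Finset.univ.erase i, |α i k + α k i| / 2) * d i ^ 2 := by
      rw [← Finset.sum_sub_distrib]
      exact Finset.sum_congr rfl fun i _ => by rw [hK]; ring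
    rw [hKsum]
    linarith [hc, hT2]
  have hfinal : ∑ i, K i * d i ^ 2 ≥ κ * ∑ i, d i ^ 2 := by
    rw [Finset.mul_sum]
    apply Finset.sum_le_sum
    intro i _
    exact mul_le_mul_of_nonneg_right (hκK i) (sq_nonneg _)
  calc ∑ i, (G x i - G y i) * (x i - y i)
      = ∑ i, (c' i (x i) - c' i (y i)) * d i + T := expand
    _ ≥ ∑ i, K i * d i ^ 2 := hKd
    _ ≥ κ * ∑ i, d i ^ 2 := hfinal
    _ = κ * ∑ i, (x i - y i) ^ 2 := by simp [hd]
end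

section
/- Consider an N-player aggregative game with pseudogradient G_i(x) := c_i'(x_i) + Σ_{k≠i} α_{i,k} x_k, where each c_i : ℝ → ℝ is differentiable with (c_i'(a) − c_i'(b))(a − b) ≥ κ_i (a − b)² for all a, b ∈ ℝ and κ_i > 0, and assume K_j := κ_j − Σ_{k≠j} |α_{j,k} + α_{k,j}|/2 > 0 for all j ∈ {1,…,N}. Let d ∈ {1,…,N} be the deceptive player, let 𝒟 ⊆ {1,…,N} \ {d} be a nonempty set of oblivious players with α_{i,d} ≠ 0 for all i ∈ 𝒟, and define the deceptive game operator γ(x, δ)_i := G_i(x) + δ α_{i,d} x_i for i ∈ 𝒟 and γ(x, δ)_i := G_i(x) for i ∉ 𝒟. Define δ⁻ := max over i ∈ 𝒟 with α_{i,d} > 0 of (−K_i / α_{i,d}) and δ⁺ := min over i ∈ 𝒟 with α_{i,d} < 0 of (−K_i / α_{i,d}). Then: (a) if α_{i,d} > 0 for all i ∈ 𝒟, then for every δ ∈ (δ⁻, ∞) the map γ(·, δ) is strongly monotone; (b) if α_{i,d} < 0 for all i ∈ 𝒟, then for every δ ∈ (−∞, δ⁺) the map γ(·, δ) is strongly monotone;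 (c) otherwise, for every δ ∈ (δ⁻, δ⁺) the map γ(·, δ) is strongly monotone. In each case, γ(·, δ) is κ-strongly monotone for every κ ∈ (0, min( min_{j∉𝒟} K_j, min_{i∈𝒟} (K_i + δ α_{i,d}) )]. -/
/-- `F : ℝ^N → ℝ^N` is `κ`-strongly monotone (w.r.t. the Euclidean inner
product and norm). -/
def StronglyMonotoneWith {N : ℕ} (F : (Fin N → ℝ) → Fin N → ℝ) (κ : ℝ) : Prop :=
  ∀ x y : Fin N → ℝ,
    ∑ i, (F x i - F y i) * (x i - y i) ≥ κ * ∑ i, (x i - y i)^2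

lemma quad_bound {N : ℕ} (α : Fin N → Fin N → ℝ) (hα : ∀ k, α k k = 0)
    (z : Fin N → ℝ) :
    ∑ i, (∑ k ∈ Finset.univ.erase i, α i k * z k) * z i ≥
      -∑ i, (∑ k ∈ Finset.univ.erase i, |α i k + α k i| / 2) * z i ^ 2 := by
  have e1 : ∀ i : Fin N, (∑ k ∈ Finset.univ.erase i, α i k * z k) * z i
      = ∑ k, α i k * (z i * z k) := by
    intro i
    rw [Finset.sum_erase _ (by simp [hα i]), Finset.sum_mul]
    exact Finset.sum_congr rfl fun k _ => by ring
  have e2 : ∀ i : Fin N, (∑ k ∈ Finset.univ.erase i, |α i k + α k i| / 2) * z i ^ 2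
      = ∑ k, |α i k + α k i| / 2 * z i ^ 2 := by
    intro i
    rw [Finset.sum_erase _ (by simp [hα i]), Finset.sum_mul]
  simp only [e1, e2]
  have hswap : ∑ i : Fin N, ∑ k : Fin N, α k i * (z i * z k)
      = ∑ i : Fin N, ∑ k : Fin N, α i k * (z i * z k) := by
    rw [Finset.sum_comm]
    exact Finset.sum_congr rfl fun i _ => Finset.sum_congr rfl fun k _ => by ring
  have hterm : ∀ i k : Fin N, (α i k + α k i) * (z i * z k)
      ≥ -(|α i k + α k i| * (z i ^ 2 + z k ^ 2) / 2) := by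
    intro i k
    have h1 : |z i * z k| ≤ (z i ^ 2 + z k ^ 2) / 2 := by
      rw [abs_mul]
      nlinarith [sq_nonneg (|z i| - |z k|), sq_abs (z i), sq_abs (z k)]
    have h2 : -(|(α i k + α k i) * (z i * z k)|) ≤ (α i k + α k i) * (z i * z k) :=
      neg_abs_le _
    rw [abs_mul] at h2
    nlinarith [abs_nonneg (α i k + α k i),
      mul_le_mul_of_nonneg_left h1 (abs_nonneg (α i k + α k i))]
  have hsum : ∑ i : Fin N, ∑ k : Fin N, (α i k + α k i) * (z i * z k)
      ≥ ∑ i : Fin N, ∑ k : Fin N, -(|α i k + α k i| * (z i ^ 2 + z k ^ 2) / 2) :=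
    Finset.sum_le_sum fun i _ => Finset.sum_le_sum fun k _ => hterm i k
  have habs_swap : ∑ i : Fin N, ∑ k : Fin N, |α i k + α k i| * z k ^ 2
      = ∑ i : Fin N, ∑ k : Fin N, |α i k + α k i| * z i ^ 2 := by
    rw [Finset.sum_comm]
    exact Finset.sum_congr rfl fun i _ => Finset.sum_congr rfl fun k _ => by
      rw [add_comm (α k i)]
  have hexpand1 : ∑ i : Fin N, ∑ k : Fin N, (α i k + α k i) * (z i * z k)
      = (∑ i : Fin N, ∑ k : Fin N, α i k * (z i * z k))
        + ∑ i : Fin N, ∑ k : Fin N, α k i * (z i * z k) := by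
    rw [← Finset.sum_add_distrib]
    exact Finset.sum_congr rfl fun i _ => by
      rw [← Finset.sum_add_distrib]
      exact Finset.sum_congr rfl fun k _ => by ring
  have h0 : ∑ i : Fin N, ∑ k : Fin N, |α i k + α k i| * (z i ^ 2 + z k ^ 2)
      = (∑ i : Fin N, ∑ k : Fin N, |α i k + α k i| * z i ^ 2)
        + ∑ i : Fin N, ∑ k : Fin N, |α i k + α k i| * z k ^ 2 := by
    rw [← Finset.sum_add_distrib]
    refine Finset.sum_congr rfl fun i _ => ?_
    rw [← Finset.sum_add_distrib]
    exact Finset.sum_congr rfl fun k _ => by ring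
  have hexpand2 : ∑ i : Fin N, ∑ k : Fin N, -(|α i k + α k i| * (z i ^ 2 + z k ^ 2) / 2)
      = -((∑ i : Fin N, ∑ k : Fin N, |α i k + α k i| * (z i ^ 2 + z k ^ 2)) / 2) := by
    simp only [Finset.sum_neg_distrib, ← Finset.sum_div]
  have hhalf : ∀ i : Fin N, ∑ k : Fin N, |α i k + α k i| / 2 * z i ^ 2
      = (∑ k : Fin N, |α i k + α k i| * z i ^ 2) / 2 := by
    intro i
    rw [Finset.sum_div]
    exact Finset.sum_congr rfl fun k _ => by ring
  simp only [hhalf]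
  rw [hexpand1, hexpand2, h0, habs_swap, hswap] at hsum
  rw [← Finset.sum_div]
  linarith

lemma key_mono {N : ℕ} (c' : Fin N → ℝ → ℝ) (κv : Fin N → ℝ)
    (hsc : ∀ i a b, (c' i a - c' i b) * (a - b) ≥ κv i * (a - b)^2)
    (α : Fin N → Fin N → ℝ) (hα : ∀ k, α k k = 0)
    (d : Fin N) (𝒟 : Finset (Fin N)) (δ κ : ℝ)
    (hκ : ∀ i, κ ≤ (κv i - ∑ k ∈ Finset.univ.erase i, |α i k + α k i| / 2)
        + (if i ∈ 𝒟 then δ * α i d else 0)) :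
    StronglyMonotoneWith (fun x i =>
      (c' i (x i) + ∑ k ∈ Finset.univ.erase i, α i k * x k)
        + (if i ∈ 𝒟 then δ * (α i d * x i) else 0)) κ := by
  intro x y
  have hsplit : ∀ i : Fin N,
      (((c' i (x i) + ∑ k ∈ Finset.univ.erase i, α i k * x k)
          + (if i ∈ 𝒟 then δ * (α i d * x i) else 0))
        - ((c' i (y i) + ∑ k ∈ Finset.univ.erase i, α i k * y k)
          + (if i ∈ 𝒟 then δ * (α i d * y i) else 0))) * (x i - y i)
      = (c' i (x i) - c' i (y i)) * (x i - y i)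
        + (∑ k ∈ Finset.univ.erase i, α i k * (x k - y k)) * (x i - y i)
        + (if i ∈ 𝒟 then δ * α i d else 0) * (x i - y i) ^ 2 := by
    intro i
    have hsz : ∑ k ∈ Finset.univ.erase i, α i k * (x k - y k)
        = (∑ k ∈ Finset.univ.erase i, α i k * x k)
          - ∑ k ∈ Finset.univ.erase i, α i k * y k := by
      rw [← Finset.sum_sub_distrib]
      exact Finset.sum_congr rfl fun k _ => mul_sub _ _ _
    by_cases hi : i ∈ 𝒟 <;> simp only [hi, if_true, if_false] <;> rw [hsz] <;> ring
  have h1 : ∑ i, (((c' i (x i) + ∑ k ∈ Finset.univ.erase i, α i k * x k)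
          + (if i ∈ 𝒟 then δ * (α i d * x i) else 0))
        - ((c' i (y i) + ∑ k ∈ Finset.univ.erase i, α i k * y k)
          + (if i ∈ 𝒟 then δ * (α i d * y i) else 0))) * (x i - y i)
      = (∑ i, (c' i (x i) - c' i (y i)) * (x i - y i))
        + (∑ i, (∑ k ∈ Finset.univ.erase i, α i k * (x k - y k)) * (x i - y i))
        + ∑ i, (if i ∈ 𝒟 then δ * α i d else 0) * (x i - y i) ^ 2 := by
    rw [← Finset.sum_add_distrib, ← Finset.sum_add_distrib]
    exact Finset.sum_congr rfl fun i _ => hsplit i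
  have hA : ∑ i, (c' i (x i) - c' i (y i)) * (x i - y i)
      ≥ ∑ i, κv i * (x i - y i) ^ 2 :=
    Finset.sum_le_sum fun i _ => hsc i (x i) (y i)
  have hB := quad_bound α hα (fun i => x i - y i)
  have hfinal : (∑ i, κv i * (x i - y i) ^ 2)
      + (-∑ i, (∑ k ∈ Finset.univ.erase i, |α i k + α k i| / 2) * (x i - y i) ^ 2)
      + (∑ i, (if i ∈ 𝒟 then δ * α i d else 0) * (x i - y i) ^ 2)
      ≥ κ * ∑ i, (x i - y i) ^ 2 := by
    rw [Finset.mul_sum, ← Finset.sum_neg_distrib, ← Finset.sum_add_distrib,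
      ← Finset.sum_add_distrib]
    refine Finset.sum_le_sum fun i _ => ?_
    have h2 := mul_le_mul_of_nonneg_right (hκ i) (sq_nonneg (x i - y i))
    nlinarith [h2]
  show _ ≥ _
  simp only at h1 ⊢
  rw [h1]
  linarith

theorem stmt9 (N : ℕ) (hN : 1 ≤ N)
    (c : Fin N → ℝ → ℝ) (c' : Fin N → ℝ → ℝ) (κv : Fin N → ℝ)
    (hderiv : ∀ i x, HasDerivAt (c i) (c' i x) x)
    (hκv : ∀ i, 0 < κv i)
    (hsc : ∀ i a b, (c' i a - c' i b) * (a - b) ≥ κv i * (a - b)^2)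
    (α : Fin N → Fin N → ℝ) (hα : ∀ k, α k k = 0)
    (G : (Fin N → ℝ) → Fin N → ℝ)
    (hG : G = fun x i => c' i (x i) + ∑ k ∈ Finset.univ.erase i, α i k * x k)
    (K : Fin N → ℝ)
    (hK : K = fun j => κv j - ∑ k ∈ Finset.univ.erase j, |α j k + α k j| / 2)
    (hKpos : ∀ j, 0 < K j)
    (d : Fin N) (𝒟 : Finset (Fin N)) (h𝒟ne : 𝒟.Nonempty) (hd𝒟 : d ∉ 𝒟)
    (hαd : ∀ i ∈ 𝒟, α i d ≠ 0)
    (γ : (Fin N → ℝ) → ℝ → Fin N → ℝ)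
    (hγ : γ = fun x δ i => G x i + (if i ∈ 𝒟 then δ * (α i d * x i) else 0))
    (δminus δplus : ℝ)
    (hδminus : δminus = sSup ((fun i => -K i / α i d) '' {i | i ∈ 𝒟 ∧ 0 < α i d}))
    (hδplus : δplus = sInf ((fun i => -K i / α i d) '' {i | i ∈ 𝒟 ∧ α i d < 0})) :
    ((∀ i ∈ 𝒟, 0 < α i d) → ∀ δ ∈ Set.Ioi δminus,
        ∃ κ > 0, StronglyMonotoneWith (fun x => γ x δ) κ) ∧
    ((∀ i ∈ 𝒟, α i d < 0) → ∀ δ ∈ Set.Iio δplus,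
        ∃ κ > 0, StronglyMonotoneWith (fun x => γ x δ) κ) ∧
    ((¬ (∀ i ∈ 𝒟, 0 < α i d)) → (¬ (∀ i ∈ 𝒟, α i d < 0)) →
        ∀ δ ∈ Set.Ioo δminus δplus,
        ∃ κ > 0, StronglyMonotoneWith (fun x => γ x δ) κ) ∧
    (∀ δ : ℝ, ∀ κ : ℝ, 0 < κ →
        κ ≤ min (sInf (K '' {j : Fin N | j ∉ 𝒟}))
              (sInf ((fun i => K i + δ * α i d) '' (𝒟 : Set (Fin N)))) →
        StronglyMonotoneWith (fun x => γ x δ) κ) := by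
  -- K i equals the expression used in key_mono
  have hKi : ∀ i, K i = κv i - ∑ k ∈ Finset.univ.erase i, |α i k + α k i| / 2 := by
    intro i; rw [hK]
  -- the monotonicity core, stated via K
  have core : ∀ δ κ : ℝ,
      (∀ i, κ ≤ K i + (if i ∈ 𝒟 then δ * α i d else 0)) →
      StronglyMonotoneWith (fun x => γ x δ) κ := by
    intro δ κ hκ
    have h := key_mono c' κv hsc α hα d 𝒟 δ κ (fun i => by rw [← hKi i]; exact hκ i)
    rw [hγ, hG]
    exact h
  -- positivity for 0 < α i d side
  have hpos_side : ∀ i ∈ 𝒟, 0 < α i d → ∀ δ : ℝ, δminus < δ → 0 < K i + δ * α i d := by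
    intro i hi hp δ hδ
    have hmem : (-K i / α i d) ∈ ((fun i => -K i / α i d) '' {i | i ∈ 𝒟 ∧ 0 < α i d}) :=
      ⟨i, ⟨hi, hp⟩, rfl⟩
    have h1 : -K i / α i d ≤ δminus :=
      hδminus ▸ le_csSup (Set.Finite.bddAbove (Set.toFinite _)) hmem
    have h2 : -K i / α i d < δ := lt_of_le_of_lt h1 hδ
    have h3 : -K i < δ * α i d := (div_lt_iff₀ hp).mp h2
    linarith
  have hneg_side : ∀ i ∈ 𝒟, α i d < 0 → ∀ δ : ℝ, δ < δplus → 0 < K i + δ * α i d := by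
    intro i hi hp δ hδ
    have hmem : (-K i / α i d) ∈ ((fun i => -K i / α i d) '' {i | i ∈ 𝒟 ∧ α i d < 0}) :=
      ⟨i, ⟨hi, hp⟩, rfl⟩
    have h1 : δplus ≤ -K i / α i d :=
      hδplus ▸ csInf_le (Set.Finite.bddBelow (Set.toFinite _)) hmem
    have h2 : δ < -K i / α i d := lt_of_lt_of_le hδ h1
    have h3 : -K i < δ * α i d := (lt_div_iff_of_neg hp).mp h2
    linarith
  -- existence of positive κ from pointwise positivity on 𝒟
  have main : ∀ δ : ℝ, (∀ i ∈ 𝒟, 0 < K i + δ * α i d) →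
      ∃ κ > 0, StronglyMonotoneWith (fun x => γ x δ) κ := by
    intro δ hpos
    have hne : (Finset.univ : Finset (Fin N)).Nonempty := ⟨⟨0, hN⟩, Finset.mem_univ _⟩
    refine ⟨Finset.univ.inf' hne (fun i => K i + (if i ∈ 𝒟 then δ * α i d else 0)),
      ?_, core δ _ (fun i => Finset.inf'_le _ (Finset.mem_univ i))⟩
    rw [gt_iff_lt, Finset.lt_inf'_iff]
    intro i _
    by_cases hi : i ∈ 𝒟
    · simpa [hi] using hpos i hi
    · simpa [hi] using hKpos i
  refine ⟨?_, ?_, ?_, ?_⟩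
  · intro hall δ hδ
    exact main δ fun i hi => hpos_side i hi (hall i hi) δ hδ
  · intro hall δ hδ
    exact main δ fun i hi => hneg_side i hi (hall i hi) δ hδ
  · intro h1 h2 δ hδ
    refine main δ fun i hi => ?_
    rcases lt_trichotomy (α i d) 0 with h | h | h
    · exact hneg_side i hi h δ hδ.2
    · exact absurd h (hαd i hi)
    · exact hpos_side i hi h δ hδ.1
  · intro δ κ hκpos hκle
    refine core δ κ fun i => ?_
    by_cases hi : i ∈ 𝒟
    · have hmem : K i + δ * α i d ∈ ((fun i => K i + δ * α i d) '' (𝒟 : Set (Fin N))) :=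
        ⟨i, hi, rfl⟩
      have := csInf_le (Set.Finite.bddBelow (Set.toFinite _)) hmem
      simp only [hi, if_true]
      exact le_trans (le_trans hκle (min_le_right _ _)) this
    · have hmem : K i ∈ (K '' {j : Fin N | j ∉ 𝒟}) := ⟨i, hi, rfl⟩
      have := csInf_le (Set.Finite.bddBelow (Set.toFinite _)) hmem
      simp only [hi, if_false, add_zero]
      exact le_trans (le_trans hκle (min_le_left _ _)) this
end

section
/- Let N ≥ 1 and consider an N-player aggregative game with pseudogradient G_i(x) := c_i'(x_i) + Σ_{k≠i} α_{i,k} x_k, where each c_i : ℝ → ℝ is twice continuously differentiable with c_i''(x) ≥ κ_i > 0 for all x. Let d ∈ {1,…,N} be the deceptive player and 𝒟 ⊆ {1,…,N} \ {d} the set of oblivious players; let Λ ∈ ℝ^(N×N) be diagonal with Λ_{ii} = α_{i,d} for i ∈ 𝒟 and 0 otherwise, and γ(x, δ) := G(x) + δΛx. Let x* ∈ ℝ^N satisfy G(x*) = 0, assume the Jacobian Ξ* := DG(x*) is invertible, and suppose ((Ξ*)^{-1} Λ x*)_d · x_d* ≠ 0. Let U ⊆ ℝ be an open interval containing 0 and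 g : U → ℝ^N be continuously differentiable with g(0) = x* and γ(g(δ), δ) = 0 for all δ ∈ U, so that g'(0) = −(Ξ*)^{-1} Λ x*. Then there exists a nonempty open interval E ⊆ U \ {0} having 0 as an endpoint such that J_d(g(δ)) < J_d(x*) for every δ ∈ E, where J_d(x) := c_d(x_d) + (Σ_{k≠d} α_{d,k} x_k)·x_d. -/
/-!
Since the deceiver `d` is not among the deceived players, the `d`-th row of the deceptive game
operator is the plain first-order condition `c_d'(x_d) + Σ_{k≠d} α_{d,k} x_k = 0`. Along the
Deceptive Nash Equilibrium curve the deceiver's cost is therefore `c_d(y) - c_d'(y) y` at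
`y = g_d(δ)`, whose derivative at `δ = 0` is `c_d''(x*_d) x*_d (Ξ*⁻¹ Λ x*)_d ≠ 0`.
A function with nonzero derivative at a point drops strictly below its value there on one side.
-/

open Filter Topology Set

theorem HasDerivAt.eventually_nhdsGT_lt_of_neg {f : ℝ → ℝ} {f' x : ℝ} (hf : HasDerivAt f f' x)
    (hf' : f' < 0) : ∀ᶠ y in 𝓝[>] x, f y < f x := by
  have hslope := (hasDerivAt_iff_tendsto_slope.mp hf).mono_left (nhdsGT_le_nhdsNE x)
  filter_upwards [hslope.eventually (eventually_lt_nhds hf'), self_mem_nhdsWithin]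
    with y hy hxy
  exact (slope_neg_iff_of_le (le_of_lt hxy)).mp hy

theorem HasDerivAt.eventually_nhdsLT_lt_of_pos {f : ℝ → ℝ} {f' x : ℝ} (hf : HasDerivAt f f' x)
    (hf' : 0 < f') : ∀ᶠ y in 𝓝[<] x, f y < f x := by
  have hslope := (hasDerivAt_iff_tendsto_slope.mp hf).mono_left (nhdsLT_le_nhdsNE x)
  filter_upwards [hslope.eventually (eventually_gt_nhds hf'), self_mem_nhdsWithin]
    with y hy hyx
  rw [slope_comm] at hy
  exact (slope_pos_iff_of_le (le_of_lt hyx)).mp hy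

theorem HasDerivAt.exists_one_sided_Ioo_lt {f : ℝ → ℝ} {f' x : ℝ} {U : Set ℝ}
    (hf : HasDerivAt f f' x) (hf' : f' ≠ 0) (hU : U ∈ 𝓝 x) :
    ∃ E : Set ℝ, (∃ R > 0, E = Ioo (x - R) x ∨ E = Ioo x (x + R)) ∧
      E ⊆ U \ {x} ∧ ∀ y ∈ E, f y < f x := by
  rcases hf'.lt_or_gt with hneg | hpos
  · obtain ⟨u, hxu, hsub⟩ := mem_nhdsGT_iff_exists_Ioo_subset.mp
      ((hf.eventually_nhdsGT_lt_of_neg hneg).and (nhdsWithin_le_nhds hU))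
    refine ⟨Ioo x u, ⟨u - x, sub_pos.mpr hxu, Or.inr (by rw [add_sub_cancel])⟩,
      fun y hy => ⟨(hsub hy).2, hy.1.ne'⟩, fun y hy => (hsub hy).1⟩
  · obtain ⟨l, hlx, hsub⟩ := mem_nhdsLT_iff_exists_Ioo_subset.mp
      ((hf.eventually_nhdsLT_lt_of_pos hpos).and (nhdsWithin_le_nhds hU))
    refine ⟨Ioo l x, ⟨x - l, sub_pos.mpr hlx, Or.inl (by rw [sub_sub_cancel])⟩,
      fun y hy => ⟨(hsub hy).2, hy.2.ne⟩, fun y hy => (hsub hy).1⟩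

/-- The cost `c y + s y` of a player whose first-order condition `c' y + s = 0` holds. -/
noncomputable def equilibriumCost (c : ℝ → ℝ) (y : ℝ) : ℝ := c y - deriv c y * y

theorem add_mul_eq_equilibriumCost {c : ℝ → ℝ} {y s : ℝ} (h : deriv c y + s = 0) :
    c y + s * y = equilibriumCost c y := by
  rw [equilibriumCost, eq_neg_of_add_eq_zero_right h]
  ring

theorem hasDerivAt_equilibriumCost {c : ℝ → ℝ} (hc : ContDiff ℝ 2 c) (y : ℝ) :
    HasDerivAt (equilibriumCost c) (-(deriv (deriv c) y * y)) y := by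
  have hc' : Differentiable ℝ (deriv c) :=
    ((contDiff_succ_iff_deriv (n := 1)).mp hc).2.2.differentiable one_ne_zero
  have hprod := (hc' y).hasDerivAt.mul (hasDerivAt_id' y)
  exact ((hc.differentiable two_ne_zero y).hasDerivAt.sub hprod).congr_deriv (by ring)

theorem stmt11_general (N : ℕ)
    (c : Fin N → ℝ → ℝ) (κv : Fin N → ℝ)
    (hc : ∀ i, ContDiff ℝ 2 (c i))
    (hκ : ∀ i, 0 < κv i)
    (hconv : ∀ i x, κv i ≤ deriv (deriv (c i)) x)
    (α : Fin N → Fin N → ℝ)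
    (G : (Fin N → ℝ) → Fin N → ℝ)
    (hG : G = fun x i => deriv (c i) (x i) + ∑ k ∈ Finset.univ.erase i, α i k * x k)
    (d : Fin N) (𝒟 : Finset (Fin N)) (hd𝒟 : d ∉ 𝒟)
    (Λ : Matrix (Fin N) (Fin N) ℝ)
    (hΛ : Λ = Matrix.diagonal (fun i => if i ∈ 𝒟 then α i d else 0))
    (γ : (Fin N → ℝ) → ℝ → Fin N → ℝ)
    (hγ : γ = fun x δ => G x + δ • Λ.mulVec x)
    (xstar : Fin N → ℝ) (hxstar : G xstar = 0)
    (Ξ : Matrix (Fin N) (Fin N) ℝ)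
    (hgood : (Ξ⁻¹.mulVec (Λ.mulVec xstar)) d * xstar d ≠ 0)
    (a b : ℝ) (U : Set ℝ) (hU : U = Set.Ioo a b) (h0U : (0:ℝ) ∈ U)
    (g : ℝ → Fin N → ℝ)
    (hg0 : g 0 = xstar) (hgzero : ∀ δ ∈ U, γ (g δ) δ = 0)
    (hg' : ∀ i, HasDerivAt (fun δ => g δ i) (-(Ξ⁻¹.mulVec (Λ.mulVec xstar)) i) 0)
    (Jd : (Fin N → ℝ) → ℝ)
    (hJd : Jd = fun x => c d (x d) + (∑ k ∈ Finset.univ.erase d, α d k * x k) * x d) :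
    ∃ E : Set ℝ,
      (∃ R > 0, E = Set.Ioo (-R) 0 ∨ E = Set.Ioo 0 R) ∧
      E ⊆ U \ {0} ∧
      ∀ δ ∈ E, Jd (g δ) < Jd xstar := by
  have hJd_eq : ∀ x, G x d = 0 → Jd x = equilibriumCost (c d) (x d) := fun x hx => by
    subst hG hJd
    exact add_mul_eq_equilibriumCost hx
  have hGd : ∀ δ ∈ U, G (g δ) d = 0 := fun δ hδ => by
    have hΛd : Λ.mulVec (g δ) d = 0 := by simp [hΛ, Matrix.mulVec_diagonal, hd𝒟]
    simpa [hγ, hΛd] using congrFun (hgzero δ hδ) d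
  set v := (Ξ⁻¹.mulVec (Λ.mulVec xstar)) d
  have hderiv : HasDerivAt (fun δ => equilibriumCost (c d) (g δ d))
      (deriv (deriv (c d)) (xstar d) * (v * xstar d)) 0 := by
    have := (hasDerivAt_equilibriumCost (hc d) (g 0 d)).comp 0 (hg' d)
    rw [hg0] at this
    exact this.congr_deriv (by ring)
  have hderiv_ne : deriv (deriv (c d)) (xstar d) * (v * xstar d) ≠ 0 :=
    mul_ne_zero ((hκ d).trans_le (hconv d _)).ne' hgood
  obtain ⟨E, hE, hEU, hlt⟩ := hderiv.exists_one_sided_Ioo_lt hderiv_ne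
    ((hU ▸ isOpen_Ioo : IsOpen U).mem_nhds h0U)
  refine ⟨E, by simpa using hE, hEU, fun δ hδ => ?_⟩
  rw [hJd_eq _ (hGd δ (hEU hδ).1), hJd_eq _ (hg0 ▸ congrFun hxstar d)]
  simpa [hg0] using hlt δ hδ

theorem stmt11 (N : ℕ) (hN : 1 ≤ N)
    (c : Fin N → ℝ → ℝ) (κv : Fin N → ℝ)
    (hc : ∀ i, ContDiff ℝ 2 (c i))
    (hκ : ∀ i, 0 < κv i)
    (hconv : ∀ i x, κv i ≤ deriv (deriv (c i)) x)
    (α : Fin N → Fin N → ℝ) (hα0 : ∀ k, α k k = 0)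
    (G : (Fin N → ℝ) → Fin N → ℝ)
    (hG : G = fun x i => deriv (c i) (x i) + ∑ k ∈ Finset.univ.erase i, α i k * x k)
    (d : Fin N) (𝒟 : Finset (Fin N)) (hd𝒟 : d ∉ 𝒟)
    (Λ : Matrix (Fin N) (Fin N) ℝ)
    (hΛ : Λ = Matrix.diagonal (fun i => if i ∈ 𝒟 then α i d else 0))
    (γ : (Fin N → ℝ) → ℝ → Fin N → ℝ)
    (hγ : γ = fun x δ => G x + δ • Λ.mulVec x)
    (xstar : Fin N → ℝ) (hxstar : G xstar = 0)
    (Ξ : Matrix (Fin N) (Fin N) ℝ)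
    (hΞ : Ξ = Matrix.of fun i j =>
        if i = j then deriv (deriv (c i)) (xstar i) else α i j)
    (hΞinv : IsUnit Ξ.det)
    (hgood : (Ξ⁻¹.mulVec (Λ.mulVec xstar)) d * xstar d ≠ 0)
    (a b : ℝ) (U : Set ℝ) (hU : U = Set.Ioo a b) (h0U : (0:ℝ) ∈ U)
    (g : ℝ → Fin N → ℝ) (hgC1 : ContDiffOn ℝ 1 g U)
    (hg0 : g 0 = xstar) (hgzero : ∀ δ ∈ U, γ (g δ) δ = 0)
    (hg' : ∀ i, HasDerivAt (fun δ => g δ i) (-(Ξ⁻¹.mulVec (Λ.mulVec xstar)) i) 0)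
    (Jd : (Fin N → ℝ) → ℝ)
    (hJd : Jd = fun x => c d (x d) + (∑ k ∈ Finset.univ.erase d, α d k * x k) * x d) :
    ∃ E : Set ℝ,
      (∃ R > 0, E = Set.Ioo (-R) 0 ∨ E = Set.Ioo 0 R) ∧
      E ⊆ U \ {0} ∧
      ∀ δ ∈ E, Jd (g δ) < Jd xstar :=
  stmt11_general N c κv hc hκ hconv α G hG d 𝒟 hd𝒟 Λ hΛ γ hγ xstar hxstar Ξ hgood a b U hU h0U g hg0
    hgzero hg' Jd hJd
end

section
/- Consider a two-player aggregative game with pseudogradient G(x) = (c_1'(x_1) + α_{1,2} x_2, c_2'(x_2) + α_{2,1} x_1), where c_1, c_2 : ℝ → ℝ are differentiable with (c_i'(a) − c_i'(b))(a − b) ≥ κ_i (a − b)² for all a, b and κ_i > 0, and α_{2,1} ≠ 0. Suppose player 1 deceives player 2, so the deceptive game operator is γ(x, δ) = (c_1'(x_1) + α_{1,2} x_2, c_2'(x_2) + α_{2,1} x_1 + δ α_{2,1} x_2). Let δ_a ≠ δ_b be real numbers and x, y ∈ ℝ² satisfy γ(x, δ_a) = 0 and γ(y, δ_b) = 0 with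 x_2 = y_2. Then x = y and x_2 = 0; in particular, x is also a zero of the nominal pseudogradient G. Consequently, if the nominal game has a unique Nash equilibrium x* with x_2* ≠ 0, then the map δ ↦ g_2(δ) assigning to δ the second component of the zero of γ(·, δ) is injective on its domain. -/
theorem stmt12 (c1 c2 : ℝ → ℝ) (c1' c2' : ℝ → ℝ) (κ1 κ2 : ℝ)
    (hderiv1 : ∀ x, HasDerivAt c1 (c1' x) x)
    (hderiv2 : ∀ x, HasDerivAt c2 (c2' x) x)
    (hκ1 : 0 < κ1) (hκ2 : 0 < κ2)
    (hsc1 : ∀ a b, (c1' a - c1' b) * (a - b) ≥ κ1 * (a - b)^2)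
    (hsc2 : ∀ a b, (c2' a - c2' b) * (a - b) ≥ κ2 * (a - b)^2)
    (α12 α21 : ℝ) (hα21 : α21 ≠ 0)
    (G : ℝ × ℝ → ℝ × ℝ)
    (hG : G = fun x => (c1' x.1 + α12 * x.2, c2' x.2 + α21 * x.1))
    (γ : ℝ × ℝ → ℝ → ℝ × ℝ)
    (hγ : γ = fun x δ =>
        (c1' x.1 + α12 * x.2, c2' x.2 + α21 * x.1 + δ * (α21 * x.2))) :
    (∀ (δa δb : ℝ) (x y : ℝ × ℝ), δa ≠ δb →
        γ x δa = 0 → γ y δb = 0 → x.2 = y.2 →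
        x = y ∧ x.2 = 0 ∧ G x = 0) ∧
    (∀ xstar : ℝ × ℝ, (∀ z, G z = 0 ↔ z = xstar) → xstar.2 ≠ 0 →
      ∀ (δa δb : ℝ) (x y : ℝ × ℝ),
        γ x δa = 0 → γ y δb = 0 → x.2 = y.2 → δa = δb) := by
  subst hG hγ
  have key : ∀ (δa δb : ℝ) (x y : ℝ × ℝ), δa ≠ δb →
      (c1' x.1 + α12 * x.2, c2' x.2 + α21 * x.1 + δa * (α21 * x.2)) = (0 : ℝ × ℝ) →
      (c1' y.1 + α12 * y.2, c2' y.2 + α21 * y.1 + δb * (α21 * y.2)) = (0 : ℝ × ℝ) →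
      x.2 = y.2 →
      x = y ∧ x.2 = 0 ∧
        ((c1' x.1 + α12 * x.2, c2' x.2 + α21 * x.1) : ℝ × ℝ) = 0 := by
    intro δa δb x y hne hx hy h2
    rw [Prod.ext_iff] at hx hy
    obtain ⟨hx1, hx2⟩ := hx
    obtain ⟨hy1, hy2⟩ := hy
    simp only [Prod.fst_zero, Prod.snd_zero] at hx1 hx2 hy1 hy2
    -- first components equal
    have hc1 : c1' x.1 = c1' y.1 := by
      rw [h2] at hx1; linarith
    have h1 : x.1 = y.1 := by
      have h := hsc1 x.1 y.1
      rw [hc1] at h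
      have hsq : (x.1 - y.1)^2 = 0 := by nlinarith [sq_nonneg (x.1 - y.1)]
      have := sq_eq_zero_iff.mp hsq
      linarith
    -- second components: subtract
    have hsub : (δa - δb) * (α21 * x.2) = 0 := by
      have hc2 : c2' x.2 = c2' y.2 := by rw [h2]
      linear_combination hx2 - hy2 - hc2 - α21 * h1 - δb * α21 * h2
    have hx2zero : x.2 = 0 := by
      rcases mul_eq_zero.mp hsub with h | h
      · exact absurd (sub_eq_zero.mp h) hne
      · rcases mul_eq_zero.mp h with h' | h'
        · exact absurd h' hα21
        · exact h'
    refine ⟨Prod.ext h1 h2, hx2zero, ?_⟩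
    rw [Prod.ext_iff]
    constructor
    · simpa using hx1
    · simp only [Prod.snd_zero]
      linear_combination hx2 - δa * α21 * hx2zero
  constructor
  · intro δa δb x y hne hx hy h2
    exact key δa δb x y hne hx hy h2
  · intro xstar huniq hstar δa δb x y hx hy h2
    by_contra hne
    obtain ⟨hxy, hx2, hGx⟩ := key δa δb x y hne hx hy h2
    have := (huniq x).mp hGx
    rw [this] at hx2
    exact hstar hx2
end
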